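/- Let f : Ω → ℂ be a nonvanishing scalar C¹ function on an open set Ω ⊆ ℝ³. If W = W₀ + 𝐖 : Ω → ℍ(ℂ) is a C¹ solution of the main Vekua equation VW = 0 and 𝚽 = f𝐖, then D𝚽 = −(f/2)·V̄W; equivalently, div 𝚽 = 0 and rot 𝚽 = −(f/2)·Ẇ, where Ẇ = V̄W. -/

import Mathlib

open Quaternion

noncomputable section

/-- Points of ℝ³. -/
abbrev P3 := EuclideanSpace ℝ (Fin 3)

/-- Partial derivative ∂ₖ of a complex-valued function on ℝ³. -/
def pd (k : Fin 3) (F : P3 → ℂ) : P3 → ℂ :=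
  fun p => fderiv ℝ F p (EuclideanSpace.single k 1)

/-- The Laplacian Δ = ∂₁² + ∂₂² + ∂₃². -/
def lap3 (F : P3 → ℂ) : P3 → ℂ := fun p => ∑ k : Fin 3, pd k (pd k F) p

/-- Embedding of a complex scalar as a quaternion. -/
def qC (z : ℂ) : ℍ[ℂ] := ⟨z, 0, 0, 0⟩

/-- The quaternionic imaginary units e₁, e₂, e₃. -/
def qe : Fin 3 → ℍ[ℂ] := ![⟨0,1,0,0⟩, ⟨0,0,1,0⟩, ⟨0,0,0,1⟩]

/-- The eₖ-components of a quaternion. -/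
def qcomp : Fin 3 → ℍ[ℂ] → ℂ := ![QuaternionAlgebra.imI, QuaternionAlgebra.imJ, QuaternionAlgebra.imK]

/-- Quaternionic conjugation C_H. -/
def CH (q : ℍ[ℂ]) : ℍ[ℂ] := ⟨q.re, -q.imI, -q.imJ, -q.imK⟩

/-- Componentwise partial derivative of a quaternion-valued function. -/
def pdq (k : Fin 3) (W : P3 → ℍ[ℂ]) : P3 → ℍ[ℂ] :=
  fun p => ⟨pd k (fun x => (W x).re) p, pd k (fun x => (W x).imI) p,
            pd k (fun x => (W x).imJ) p, pd k (fun x => (W x).imK) p⟩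

/-- The Dirac (Moisil–Theodorescu) operator D Q = Σₖ eₖ ∂ₖ Q. -/
def Dq (W : P3 → ℍ[ℂ]) : P3 → ℍ[ℂ] := fun p => ∑ k : Fin 3, qe k * pdq k W p

/-- The right Dirac operator Dᵣ Q = Σₖ (∂ₖ Q) eₖ. -/
def Drq (W : P3 → ℍ[ℂ]) : P3 → ℍ[ℂ] := fun p => ∑ k : Fin 3, pdq k W p * qe k

/-- Gradient of a scalar function viewed as a purely vectorial quaternion. -/
def gradq (F : P3 → ℂ) : P3 → ℍ[ℂ] := fun p => ⟨0, pd 0 F p, pd 1 F p, pd 2 F p⟩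

/-- Divergence of (the vector part of) a quaternion-valued function. -/
def divq (W : P3 → ℍ[ℂ]) : P3 → ℂ :=
  fun p => pd 0 (fun x => (W x).imI) p + pd 1 (fun x => (W x).imJ) p + pd 2 (fun x => (W x).imK) p

/-- Rotor (curl) of (the vector part of) a quaternion-valued function. -/
def rotq (W : P3 → ℍ[ℂ]) : P3 → ℍ[ℂ] :=
  fun p => ⟨0,
    pd 1 (fun x => (W x).imK) p - pd 2 (fun x => (W x).imJ) p,
    pd 2 (fun x => (W x).imI) p - pd 0 (fun x => (W x).imK) p,
    pd 0 (fun x => (W x).imJ) p - pd 1 (fun x => (W x).imI) p⟩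

/-- Cross product of the vector parts of two quaternions. -/
def crossq (u v : ℍ[ℂ]) : ℍ[ℂ] :=
  ⟨0, u.imJ * v.imK - u.imK * v.imJ, u.imK * v.imI - u.imI * v.imK, u.imI * v.imJ - u.imJ * v.imI⟩

/-- Bilinear scalar product of the vector parts of two quaternions. -/
def dotq (u v : ℍ[ℂ]) : ℂ := u.imI * v.imI + u.imJ * v.imJ + u.imK * v.imK

/-- `Cⁿ` smoothness of a quaternion-valued function on a set, componentwise. -/
def QContDiffOn (n : ℕ) (W : P3 → ℍ[ℂ]) (Ω : Set P3) : Prop :=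
  ContDiffOn ℝ n (fun p => (W p).re) Ω ∧ ContDiffOn ℝ n (fun p => (W p).imI) Ω ∧
  ContDiffOn ℝ n (fun p => (W p).imJ) Ω ∧ ContDiffOn ℝ n (fun p => (W p).imK) Ω

/-- The pure-quaternion Df/f built from a nonvanishing scalar function f. -/
def DfF (f : P3 → ℂ) : P3 → ℍ[ℂ] := fun p => (f p)⁻¹ • gradq f p

/-! The Vekua equation `f · DW = ∇f · C_H W` splits into a scalar part
`f div 𝐖 + ∇f · 𝐖 = 0` and a vector part `f rot 𝐖 + ∇f × 𝐖 = W₀ ∇f − f ∇W₀`.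
By the product rules for `div` and `rot`, these say exactly that `div 𝚽 = 0` and
`rot 𝚽 = W₀ ∇f − f ∇W₀`. Expanding `V̄W` with the same two identities gives
`−(f/2) V̄W = W₀ ∇f − f ∇W₀` as well, and `D𝚽 = −div 𝚽 + rot 𝚽` since `𝚽` is purely vectorial. -/

lemma Dq_apply_eq_div_grad_rot (W : P3 → ℍ[ℂ]) (p : P3) :
    Dq W p = qC (-divq W p) + gradq (fun x => (W x).re) p + rotq W p := by
  ext <;> simp [Dq, Fin.sum_univ_three] <;> simp [divq, rotq, gradq, qC, pdq, qe] <;> ring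

lemma Drq_apply_eq_div_grad_rot (W : P3 → ℍ[ℂ]) (p : P3) :
    Drq W p = qC (-divq W p) + gradq (fun x => (W x).re) p - rotq W p := by
  ext <;> simp [Drq, Fin.sum_univ_three] <;> simp [divq, rotq, gradq, qC, pdq, qe] <;> ring

lemma Dq_apply_of_re_eq_zero {Φ : P3 → ℍ[ℂ]} (hΦ : ∀ x, (Φ x).re = 0) (p : P3) :
    Dq Φ p = qC (-divq Φ p) + rotq Φ p := by
  have hgrad : gradq (fun x => (Φ x).re) p = 0 := by ext <;> simp [gradq, hΦ, pd]
  rw [Dq_apply_eq_div_grad_rot, hgrad, add_zero]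

lemma mul_CH_of_re_eq_zero {u : ℍ[ℂ]} (hu : u.re = 0) (q : ℍ[ℂ]) :
    u * CH q = q.re • u + qC (dotq u q) - crossq u q := by
  ext <;> simp <;> simp [CH, qC, dotq, crossq, hu] <;> ring

lemma CH_mul_of_re_eq_zero {u : ℍ[ℂ]} (hu : u.re = 0) (q : ℍ[ℂ]) :
    CH q * u = q.re • u + qC (dotq u q) + crossq u q := by
  ext <;> simp <;> simp [CH, qC, dotq, crossq, hu] <;> ring

lemma gradq_re (F : P3 → ℂ) (p : P3) : (gradq F p).re = 0 := rfl

lemma DfF_re (f : P3 → ℂ) (p : P3) : (DfF f p).re = 0 := by simp [DfF, gradq_re]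

lemma pd_mul (k : Fin 3) {f g : P3 → ℂ} {p : P3}
    (hf : DifferentiableAt ℝ f p) (hg : DifferentiableAt ℝ g p) :
    pd k (fun x => f x * g x) p = f p * pd k g p + g p * pd k f p := by
  simp [pd, fderiv_fun_mul hf hg]

section ProductRules

variable {f : P3 → ℂ} {V : P3 → ℍ[ℂ]} {p : P3}

lemma divq_smul (hf : DifferentiableAt ℝ f p)
    (hI : DifferentiableAt ℝ (fun x => (V x).imI) p)
    (hJ : DifferentiableAt ℝ (fun x => (V x).imJ) p)
    (hK : DifferentiableAt ℝ (fun x => (V x).imK) p) :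
    divq (fun x => f x • V x) p = f p * divq V p + dotq (gradq f p) (V p) := by
  simp only [divq, imI_smul, imJ_smul, imK_smul, smul_eq_mul,
    pd_mul _ hf hI, pd_mul _ hf hJ, pd_mul _ hf hK, dotq, gradq]
  ring

lemma rotq_smul (hf : DifferentiableAt ℝ f p)
    (hI : DifferentiableAt ℝ (fun x => (V x).imI) p)
    (hJ : DifferentiableAt ℝ (fun x => (V x).imJ) p)
    (hK : DifferentiableAt ℝ (fun x => (V x).imK) p) :
    rotq (fun x => f x • V x) p = f p • rotq V p + crossq (gradq f p) (V p) := by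
  ext <;> simp <;> simp [rotq, pd_mul _ hf hI, pd_mul _ hf hJ, pd_mul _ hf hK, crossq, gradq] <;> ring

end ProductRules

section Vekua

variable {f : P3 → ℂ} {W : P3 → ℍ[ℂ]} {p : P3}

lemma vekua_scalar_part (hf0 : f p ≠ 0) (hV : Dq W p = DfF f p * CH (W p)) :
    f p * divq W p + dotq (gradq f p) (W p) = 0 := by
  have h := congrArg QuaternionAlgebra.re hV
  rw [Dq_apply_eq_div_grad_rot, mul_CH_of_re_eq_zero (DfF_re f p)] at h
  simp only [re_add, re_sub, re_smul, smul_eq_mul] at h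
  simp only [qC, gradq_re, rotq, DfF, re_smul, imI_smul, imJ_smul, imK_smul, smul_eq_mul, dotq,
    crossq, add_zero, mul_zero, zero_add, sub_zero] at h
  field_simp at h
  simp only [dotq]
  linear_combination -h

lemma vekua_vector_part (hf0 : f p ≠ 0) (hV : Dq W p = DfF f p * CH (W p)) :
    f p • rotq W p + crossq (gradq f p) (W p) =
      (W p).re • gradq f p - f p • gradq (fun x => (W x).re) p := by
  rw [Dq_apply_eq_div_grad_rot, mul_CH_of_re_eq_zero (DfF_re f p)] at hV
  have h1 := congrArg QuaternionAlgebra.imI hV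
  have h2 := congrArg QuaternionAlgebra.imJ hV
  have h3 := congrArg QuaternionAlgebra.imK hV
  simp only [imI_add, imI_sub, imI_smul, imJ_add, imJ_sub, imJ_smul, imK_add, imK_sub, imK_smul,
    smul_eq_mul] at h1 h2 h3
  simp only [qC, rotq, crossq, DfF, imI_smul, imJ_smul, imK_smul, smul_eq_mul, zero_add,
    add_zero] at h1 h2 h3
  field_simp at h1 h2 h3
  ext <;> simp <;> simp [rotq, crossq, gradq_re]
  · linear_combination h1
  · linear_combination h2
  · linear_combination h3

lemma neg_half_smul_Drq_sub_CH_mul_DfF (hf0 : f p ≠ 0) (hV : Dq W p = DfF f p * CH (W p)) :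
    -(f p / 2) • (Drq W p - CH (W p) * DfF f p) =
      (W p).re • gradq f p - f p • gradq (fun x => (W x).re) p := by
  have hs := vekua_scalar_part hf0 hV
  have hv := vekua_vector_part hf0 hV
  have h1 := congrArg QuaternionAlgebra.imI hv
  have h2 := congrArg QuaternionAlgebra.imJ hv
  have h3 := congrArg QuaternionAlgebra.imK hv
  simp only [imI_add, imI_sub, imI_smul, imJ_add, imJ_sub, imJ_smul, imK_add, imK_sub, imK_smul,
    smul_eq_mul] at h1 h2 h3
  simp only [rotq, crossq] at h1 h2 h3
  rw [Drq_apply_eq_div_grad_rot, CH_mul_of_re_eq_zero (DfF_re f p)]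
  ext <;> simp <;> simp [qC, rotq, crossq, dotq, DfF, gradq_re]
  · right
    field_simp
    simp only [dotq] at hs
    linear_combination -hs
  · field_simp
    linear_combination h1
  · field_simp
    linear_combination h2
  · field_simp
    linear_combination h3

end Vekua

/-- for a solution W = W₀ + 𝐖 of VW = 0 and 𝚽 = f𝐖 one has
    D𝚽 = −(f/2)·V̄W, equivalently div 𝚽 = 0 and rot 𝚽 = −(f/2)·Ẇ. -/
theorem statement12 (Ω : Set P3) (hΩ : IsOpen Ω)
    (f : P3 → ℂ) (hf : ContDiffOn ℝ 1 f Ω) (hf0 : ∀ p ∈ Ω, f p ≠ 0)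
    (W : P3 → ℍ[ℂ]) (hW : QContDiffOn 1 W Ω)
    (hVek : ∀ p ∈ Ω, Dq W p - DfF f p * CH (W p) = 0)
    (Φ : P3 → ℍ[ℂ]) (hΦ : Φ = fun x => f x • Quaternion.im (W x)) :
    ∀ p ∈ Ω,
      (Dq Φ p = (-(f p / 2)) • (Drq W p - CH (W p) * DfF f p)) ∧
      (divq Φ p = 0) ∧
      (rotq Φ p = (-(f p / 2)) • (Drq W p - CH (W p) * DfF f p)) := by
  intro p hp
  have hdiff {F : P3 → ℂ} (hF : ContDiffOn ℝ 1 F Ω) : DifferentiableAt ℝ F p :=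
    (hF.differentiableOn one_ne_zero).differentiableAt (hΩ.mem_nhds hp)
  obtain ⟨-, hI, hJ, hK⟩ := hW
  have hV := sub_eq_zero.mp (hVek p hp)
  -- `divq`, `rotq`, `dotq` and `crossq` only read the vector part, so `im` vanishes by defeq.
  have hdiv : divq Φ p = 0 := by
    rw [hΦ, divq_smul (V := fun x => (W x).im) (hdiff hf) (hdiff hI) (hdiff hJ) (hdiff hK)]
    exact vekua_scalar_part (W := W) (hf0 p hp) hV
  have hrot : rotq Φ p = (-(f p / 2)) • (Drq W p - CH (W p) * DfF f p) := by
    rw [hΦ, rotq_smul (V := fun x => (W x).im) (hdiff hf) (hdiff hI) (hdiff hJ) (hdiff hK),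
      neg_half_smul_Drq_sub_CH_mul_DfF (hf0 p hp) hV]
    exact vekua_vector_part (W := W) (hf0 p hp) hV
  have hΦre : ∀ x, (Φ x).re = 0 := by simp [hΦ]
  refine ⟨?_, hdiv, hrot⟩
  rw [Dq_apply_of_re_eq_zero hΦre, hdiv, hrot, neg_zero, show qC 0 = 0 from rfl, zero_add]
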